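/- Fix (ξ,η) ∈ ℂ² and tangent vectors (u₁,v₁), (u₂,v₂) ∈ ℂ². For j = 1,2 define the real vectors Y₂⁽ʲ⁾ = 2Re[(√2·u_j/(1+|ξ|²))·e₊(ξ)] and Y₁⁽ʲ⁾ = 2Re[(√2/(1+|ξ|²))·(v_j − 2·conj(ξ)·η·u_j/(1+|ξ|²))·e₊(ξ)] in ℝ³. Then ⟨Y₁⁽¹⁾, Y₂⁽²⁾⟩ − ⟨Y₁⁽²⁾, Y₂⁽¹⁾⟩ = ω_{(ξ,η)}((u₁,v₁),(u₂,v₂)), i.e. the symplectic form evaluated on two tangent vectors equals the skew pairing of the constant and linear parts of the associated orthogonal Jacobi fields. -/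

import Mathlib

/-!
`e₊(ξ)` is an isotropic unit vector of `ℂ³`: `e₊ ⬝ e₊ = 0` and `e₊ ⬝ conj e₊ = 1`. For such a vector
the real vectors `2 Re (a e₊)` and `2 Re (b e₊)` have inner product `2 Re (a b̄)`, so the skew pairing
of the Jacobi fields is `2 Re (A₁ B̄₂ - A₂ B̄₁)` for their complex coefficients `Aⱼ`, `Bⱼ`, which
expands to `ω`.
-/

open Complex ComplexConjugate Matrix

/-- The symplectic form on the space `𝕋 ≅ ℂ²` of oriented lines, evaluated at the
point `(ξ,η)` on the pair of tangent vectors `(u₁,v₁)`, `(u₂,v₂)`. -/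
noncomputable def omegaT (ξ η : ℂ) (u₁ v₁ u₂ v₂ : ℂ) : ℝ :=
  2 * ((2 / ((1 + normSq ξ : ℝ) : ℂ) ^ 2) * (v₁ * conj u₂ - v₂ * conj u₁) -
    (4 * conj ξ * η / ((1 + normSq ξ : ℝ) : ℂ) ^ 3) * (u₁ * conj u₂ - u₂ * conj u₁)).re

/-- The complex null vector `e₊(ξ) ∈ ℂ³`. -/
noncomputable def ePlus (ξ : ℂ) : Fin 3 → ℂ :=
  ![(1 - conj ξ ^ 2) / ((Real.sqrt 2 * (1 + normSq ξ) : ℝ) : ℂ),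
    -I * (1 + conj ξ ^ 2) / ((Real.sqrt 2 * (1 + normSq ξ) : ℝ) : ℂ),
    -2 * conj ξ / ((Real.sqrt 2 * (1 + normSq ξ) : ℝ) : ℂ)]

theorem Complex.re_mul_re (z w : ℂ) : z.re * w.re = ((z * w).re + (z * conj w).re) / 2 := by
  simp only [mul_re, conj_re, conj_im]
  ring

theorem dotProduct_two_re_mul_of_isotropic {ι : Type*} [Fintype ι] {e : ι → ℂ}
    (h_iso : e ⬝ᵥ e = 0) (h_unit : e ⬝ᵥ star e = 1) (a b : ℂ) :
    (fun i => 2 * (a * e i).re) ⬝ᵥ (fun i => 2 * (b * e i).re) = 2 * (a * conj b).re := by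
  have key : ∀ i, 2 * (a * e i).re * (2 * (b * e i).re)
      = 2 * (a * b * (e i * e i) + a * conj b * (e i * star (e i))).re := by
    intro i
    have hconj : a * e i * conj (b * e i) = a * conj b * (e i * star (e i)) := by
      rw [map_mul, Complex.star_def]; ring
    rw [mul_mul_mul_comm, re_mul_re, hconj, show a * e i * (b * e i) = a * b * (e i * e i) by ring,
      add_re]
    ring
  calc _ = ∑ i, 2 * (a * b * (e i * e i) + a * conj b * (e i * star (e i))).re :=
        Finset.sum_congr rfl fun i _ => key i
    _ = 2 * (a * b * (e ⬝ᵥ e) + a * conj b * (e ⬝ᵥ star e)).re := by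
        simp only [dotProduct, Pi.star_apply, Finset.mul_sum, re_sum, Finset.sum_add_distrib,
          mul_add, add_re]
    _ = 2 * (a * conj b).re := by rw [h_iso, h_unit, mul_zero, mul_one, zero_add]

theorem ePlus_dotProduct_self (ξ : ℂ) : ePlus ξ ⬝ᵥ ePlus ξ = 0 := by
  simp only [dotProduct, Fin.sum_univ_three, ePlus, cons_val_zero, cons_val_one, cons_val_two,
    head_cons, tail_cons]
  linear_combination ((1 + conj ξ ^ 2) ^ 2 / ((Real.sqrt 2 * (1 + normSq ξ) : ℝ) : ℂ) ^ 2) * I_sq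

theorem ePlus_dotProduct_star (ξ : ℂ) : ePlus ξ ⬝ᵥ star ePlus ξ = 1 := by
  have hN : (1 + normSq ξ : ℂ) ≠ 0 := by norm_cast; linarith [normSq_nonneg ξ]
  have hs0 : ((Real.sqrt 2 : ℝ) : ℂ) ≠ 0 := by norm_cast; positivity
  have hs : ((Real.sqrt 2 : ℝ) : ℂ) ^ 2 = 2 := by norm_cast; simp
  have hn : (normSq ξ : ℂ) = conj ξ * ξ := normSq_eq_conj_mul_self
  simp only [dotProduct, Fin.sum_univ_three, ePlus, cons_val_zero, cons_val_one, cons_val_two,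
    head_cons, tail_cons, Pi.star_apply, star_def, map_div₀, map_mul, map_sub, map_add, map_neg,
    map_pow, conj_conj, conj_ofReal, conj_I, map_one, map_ofNat]
  field_simp
  push_cast
  linear_combination (-(1 + conj ξ ^ 2) * (1 + ξ ^ 2)) * I_sq - (1 + (normSq ξ : ℂ)) ^ 2 * hs
    - 2 * (2 + conj ξ * ξ + normSq ξ) * hn

/-- the symplectic form evaluated on two tangent vectors equals the
skew pairing `⟨Y₁⁽¹⁾,Y₂⁽²⁾⟩ − ⟨Y₁⁽²⁾,Y₂⁽¹⁾⟩` of the constant and linear parts of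
the associated orthogonal Jacobi fields. -/
theorem symplectic_is_jacobi_pairing (ξ η u₁ v₁ u₂ v₂ : ℂ)
    (Y₁ Y₂ : ℂ → ℂ → Fin 3 → ℝ)
    (hY₂ : ∀ u v, Y₂ u v = fun i =>
      2 * ((((Real.sqrt 2 : ℝ) : ℂ) * u / ((1 + normSq ξ : ℝ) : ℂ)) * ePlus ξ i).re)
    (hY₁ : ∀ u v, Y₁ u v = fun i =>
      2 * ((((Real.sqrt 2 / (1 + normSq ξ) : ℝ) : ℂ)) *
        (v - 2 * conj ξ * η * u / ((1 + normSq ξ : ℝ) : ℂ)) * ePlus ξ i).re) :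
    Y₁ u₁ v₁ ⬝ᵥ Y₂ u₂ v₂ - Y₁ u₂ v₂ ⬝ᵥ Y₂ u₁ v₁ = omegaT ξ η u₁ v₁ u₂ v₂ := by
  simp only [hY₁, hY₂,
    dotProduct_two_re_mul_of_isotropic (ePlus_dotProduct_self ξ) (ePlus_dotProduct_star ξ)]
  rw [omegaT, ← mul_sub, ← sub_re]
  congr 2
  have hN : (1 + normSq ξ : ℂ) ≠ 0 := by norm_cast; linarith [normSq_nonneg ξ]
  have hs : ((Real.sqrt 2 : ℝ) : ℂ) ^ 2 = 2 := by norm_cast; simp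
  simp only [map_div₀, map_mul, conj_ofReal]
  push_cast
  field_simp
  linear_combination
    ((1 + normSq ξ) * (v₁ * conj u₂ - v₂ * conj u₁) -
      2 * conj ξ * η * (u₁ * conj u₂ - u₂ * conj u₁)) * hs
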